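/- arXiv:2506.01914 — 2 statements merged into one kernel-verified Lean document; each statement's English description precedes it below -/
import Mathlib

section
/- Let X_1, ..., X_N be mutually independent real-valued random variables such that X_i has distribution function F_i(x) = [H(x)]^{η_i}, where η_i > 0 for each i and H is a continuous distribution function on ℝ. Then for the identity permutation, P(X_1 ≤ X_2 ≤ ... ≤ X_N) = (∏_{i=1}^{N} η_i) / ∏_{i=1}^{N} (∑_{j=1}^{i} η_j). -/
open MeasureTheory ProbabilityTheory Finset Filter

/-!
If `F = H ^ η` is the (continuous) distribution function of a probability measure `μ` on `ℝ`,
the image of `μ` restricted to `(-∞, t]` under `F` is Lebesgue measure on `(0, F t]`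
(probability integral transform), so `∫_{x ≤ t} H(x) ^ S dμ = η / (S + η) · H(t) ^ (S + η)`.
Integrating out the last coordinate of the product measure, induction on `N` gives
`P(X 1 ≤ ⋯ ≤ X N ≤ t) = (∏ η i) / (∏ i, ∑_{j ≤ i} η j) · H(t) ^ (∑ η i)`,
and letting `t → ∞` yields the theorem.
-/

lemma exists_setOf_le_eq_Iic {f : ℝ → ℝ} (hf : Continuous f) (hmono : Monotone f) {u : ℝ}
    (hlo : ∃ x, f x ≤ u) (hhi : ∃ x, u < f x) : ∃ c, f c = u ∧ {x | f x ≤ u} = Set.Iic c := by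
  obtain ⟨x₀, hx₀⟩ := hhi
  have hbdd : x₀ ∈ upperBounds {x | f x ≤ u} := fun x hx =>
    le_of_lt (hmono.reflect_lt (hx.trans_lt hx₀))
  set c := sSup {x | f x ≤ u}
  have hc : f c ≤ u := (isClosed_le hf continuous_const).csSup_mem hlo ⟨x₀, hbdd⟩
  have hset : {x | f x ≤ u} = Set.Iic c :=
    Set.Subset.antisymm (fun x hx => le_csSup ⟨x₀, hbdd⟩ hx) fun x hx => (hmono hx).trans hc
  obtain ⟨y, hy, hfy⟩ := intermediate_value_Icc (hbdd hc) hf.continuousOn ⟨hc, hx₀.le⟩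
  exact ⟨c, le_antisymm hy.1 (le_csSup ⟨x₀, hbdd⟩ hfy.le) ▸ hfy, hset⟩

section ContinuousCDF

variable {μ : Measure ℝ} [IsProbabilityMeasure μ]

lemma measure_setOf_cdf_le (hF : Continuous (cdf μ)) {u : ℝ} (hu : u < 1) :
    μ {x | cdf μ x ≤ u} = ENNReal.ofReal u := by
  by_cases hlo : ∃ x, cdf μ x ≤ u
  · obtain ⟨c, hc, hset⟩ := exists_setOf_le_eq_Iic hF (monotone_cdf μ) hlo
      ((tendsto_cdf_atTop μ).eventually (eventually_gt_nhds hu)).exists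
    rw [hset, ← ofReal_cdf, hc]
  · push Not at hlo
    have hu0 : u ≤ 0 := not_lt.1 fun hu0 =>
      ((tendsto_cdf_atBot μ).eventually (eventually_lt_nhds hu0)).exists.elim
        fun x hx => (hlo x).not_gt hx
    have hempty : {x | cdf μ x ≤ u} = ∅ :=
      Set.eq_empty_of_forall_notMem fun x hx => (hlo x).not_ge hx
    rw [hempty, measure_empty, ENNReal.ofReal_eq_zero.2 hu0]

lemma map_cdf_restrict_Iic (hF : Continuous (cdf μ)) (t : ℝ) :
    (μ.restrict (Set.Iic t)).map (cdf μ) = volume.restrict (Set.Ioc 0 (cdf μ t)) := by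
  refine Measure.ext_of_Iic _ _ fun a => ?_
  rw [Measure.map_apply hF.measurable measurableSet_Iic,
    Measure.restrict_apply (hF.measurable measurableSet_Iic),
    Measure.restrict_apply' measurableSet_Ioc, Set.inter_comm _ (Set.Ioc _ _), Set.Ioc_inter_Iic,
    Real.volume_Ioc, sub_zero]
  rcases le_or_gt (cdf μ t) a with hta | hat
  · have hsub : Set.Iic t ⊆ cdf μ ⁻¹' Set.Iic a := fun x hx => (monotone_cdf μ hx).trans hta
    rw [Set.inter_eq_self_of_subset_right hsub, min_eq_left hta, ofReal_cdf]
  · have hsub : cdf μ ⁻¹' Set.Iic a ⊆ Set.Iic t := fun x hx =>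
      ((monotone_cdf μ).reflect_lt (lt_of_le_of_lt hx hat)).le
    rw [Set.inter_eq_self_of_subset_left hsub, min_eq_right hat.le]
    exact measure_setOf_cdf_le hF (hat.trans_le (cdf_le_one μ t))

lemma setLIntegral_Iic_cdf_rpow (hF : Continuous (cdf μ)) {p : ℝ} (hp : -1 < p) (t : ℝ) :
    ∫⁻ x in Set.Iic t, ENNReal.ofReal (cdf μ x ^ p) ∂μ
      = ENNReal.ofReal (cdf μ t ^ (p + 1) / (p + 1)) := by
  have ht : 0 ≤ cdf μ t := cdf_nonneg μ t
  calc ∫⁻ x in Set.Iic t, ENNReal.ofReal (cdf μ x ^ p) ∂μ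
      = ∫⁻ u in Set.Ioc 0 (cdf μ t), ENNReal.ofReal (u ^ p) := by
        rw [← map_cdf_restrict_Iic hF, lintegral_map (by fun_prop) hF.measurable]
    _ = ENNReal.ofReal (∫ u in (0)..(cdf μ t), u ^ p) := by
        rw [intervalIntegral.integral_of_le ht, ofReal_integral_eq_lintegral_ofReal]
        · exact (intervalIntegral.intervalIntegrable_rpow' hp).1
        · exact (ae_restrict_iff' measurableSet_Ioc).2
            (ae_of_all _ fun u hu => Real.rpow_nonneg hu.1.le _)
    _ = ENNReal.ofReal (cdf μ t ^ (p + 1) / (p + 1)) := by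
        rw [integral_rpow (Or.inl hp), Real.zero_rpow (by linarith), sub_zero]

lemma setLIntegral_Iic_rpow_of_cdf_eq_rpow {H : ℝ → ℝ} (hH : Continuous H) (hH0 : ∀ x, 0 ≤ H x)
    {η S : ℝ} (hη : 0 < η) (hS : 0 ≤ S) (hcdf : ∀ x, cdf μ x = H x ^ η) (t : ℝ) :
    ∫⁻ x in Set.Iic t, ENNReal.ofReal (H x ^ S) ∂μ
      = ENNReal.ofReal (η / (S + η) * H t ^ (S + η)) := by
  have hF : Continuous (cdf μ) := by
    rw [funext hcdf]
    exact hH.rpow_const fun _ => Or.inr hη.le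
  have hpow : ∀ x, H x ^ S = cdf μ x ^ (S / η) := fun x => by
    rw [hcdf, ← Real.rpow_mul (hH0 x), mul_div_cancel₀ _ hη.ne']
  simp_rw [hpow]
  rw [setLIntegral_Iic_cdf_rpow hF (by linarith [div_nonneg hS hη.le]), hcdf,
    ← Real.rpow_mul (hH0 t)]
  congr 1
  field_simp

end ContinuousCDF

lemma Fin.monotone_snoc_iff {α : Type*} [Preorder α] {n : ℕ} {f : Fin n → α} {a : α} :
    Monotone (Fin.snoc f a : Fin (n + 1) → α) ↔ Monotone f ∧ ∀ i, f i ≤ a := by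
  refine ⟨fun h => ⟨fun i j hij => ?_, fun i => ?_⟩, fun ⟨hf, ha⟩ i j hij => ?_⟩
  · simpa using h (Fin.castSucc_le_castSucc_iff.2 hij)
  · simpa using h (Fin.le_last (Fin.castSucc i))
  · induction j using Fin.lastCases with
    | last =>
      induction i using Fin.lastCases with
      | last => exact le_rfl
      | cast i => simpa using ha i
    | cast j =>
      induction i using Fin.lastCases with
      | last => exact absurd hij (Fin.castSucc_lt_last j).not_ge
      | cast i => simpa using hf (Fin.castSucc_le_castSucc_iff.1 hij)

lemma Fin.monotone_snoc_and_le_iff {α : Type*} [Preorder α] {n : ℕ} {f : Fin n → α} {a b : α} :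
    (Monotone (Fin.snoc f a : Fin (n + 1) → α) ∧ ∀ i, (Fin.snoc f a : Fin (n + 1) → α) i ≤ b)
      ↔ (Monotone f ∧ ∀ i, f i ≤ a) ∧ a ≤ b := by
  simp only [Fin.monotone_snoc_iff, Fin.forall_fin_succ', Fin.snoc_castSucc, Fin.snoc_last]
  exact ⟨fun ⟨h, _, hab⟩ => ⟨h, hab⟩, fun ⟨h, hab⟩ => ⟨h, fun i => (h.2 i).trans hab, hab⟩⟩

lemma MeasureTheory.Measure.pi_eq_lintegral_snoc {α : Type*} [MeasurableSpace α] {n : ℕ}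
    (μ : Fin (n + 1) → Measure α) [∀ i, SigmaFinite (μ i)] {s : Set (Fin (n + 1) → α)}
    (hs : MeasurableSet s) :
    Measure.pi μ s
      = ∫⁻ x, Measure.pi (fun j : Fin n => μ j.castSucc) {z | Fin.snoc z x ∈ s}
          ∂μ (Fin.last n) := by
  have hmp := (measurePreserving_piFinSuccAbove μ (Fin.last n)).symm
  rw [← hmp.measure_preimage_equiv s, Measure.prod_apply (MeasurableEquiv.measurable _ hs)]
  simp only [Fin.succAbove_last, MeasurableEquiv.piFinSuccAbove_symm_apply, Fin.insertNthEquiv,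
    Equiv.coe_fn_mk, Fin.insertNth_last']
  rfl

noncomputable def savageCoeff {n : ℕ} (η : Fin n → ℝ) : ℝ := (∏ i, η i) / ∏ i, ∑ j ∈ Iic i, η j

lemma savageCoeff_nonneg {n : ℕ} {η : Fin n → ℝ} (hη : ∀ i, 0 ≤ η i) : 0 ≤ savageCoeff η :=
  div_nonneg (prod_nonneg fun i _ => hη i) (prod_nonneg fun _ _ => sum_nonneg fun j _ => hη j)

lemma savageCoeff_succ {n : ℕ} (η : Fin (n + 1) → ℝ) :
    savageCoeff η = savageCoeff (fun i => η i.castSucc) * (η (Fin.last n) / ∑ i, η i) := by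
  have hIic : ∀ i : Fin n, ∑ j ∈ Iic i.castSucc, η j = ∑ j ∈ Iic i, η j.castSucc := fun i => by
    rw [← Fin.map_castSuccEmb_Iic, sum_map]
    rfl
  have hlast : Iic (Fin.last n) = univ := eq_univ_of_forall fun j => mem_Iic.2 (Fin.le_last j)
  simp only [savageCoeff, Fin.prod_univ_castSucc (n := n), hIic, hlast, mul_div_mul_comm]

lemma pi_setOf_monotone_and_le {H : ℝ → ℝ} (hH : Continuous H) (hH0 : ∀ x, 0 ≤ H x) {n : ℕ}
    (μ : Fin n → Measure ℝ) [∀ i, IsProbabilityMeasure (μ i)] {η : Fin n → ℝ} (hη : ∀ i, 0 < η i)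
    (hcdf : ∀ i x, cdf (μ i) x = H x ^ η i) (t : ℝ) :
    Measure.pi μ {y | Monotone y ∧ ∀ m, y m ≤ t}
      = ENNReal.ofReal (savageCoeff η * H t ^ ∑ i, η i) := by
  induction n generalizing t with
  | zero =>
    have huniv : {y : Fin 0 → ℝ | Monotone y ∧ ∀ m, y m ≤ t} = Set.univ :=
      Set.eq_univ_of_forall fun y => ⟨fun i => i.elim0, fun i => i.elim0⟩
    rw [huniv, measure_univ]
    simp [savageCoeff]
  | succ n ih =>
    set c := savageCoeff fun i => η i.castSucc
    set S := ∑ i : Fin n, η i.castSucc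
    have hc0 : 0 ≤ c := savageCoeff_nonneg fun i => (hη _).le
    have hsection : ∀ x, Measure.pi (fun j : Fin n => μ j.castSucc)
        {z | Fin.snoc z x ∈ {y : Fin (n + 1) → ℝ | Monotone y ∧ ∀ m, y m ≤ t}}
          = (Set.Iic t).indicator (fun x => ENNReal.ofReal (c * H x ^ S)) x := fun x => by
      by_cases hx : x ≤ t
      · simp only [Set.mem_ofPred_eq, Fin.monotone_snoc_and_le_iff, hx, and_true]
        rw [Set.indicator_of_mem (Set.mem_Iic.2 hx), ih _ (fun i => hη _) (fun i => hcdf _)]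
      · simp [Fin.monotone_snoc_and_le_iff, hx]
    calc Measure.pi μ {y | Monotone y ∧ ∀ m, y m ≤ t}
        = ∫⁻ x in Set.Iic t, ENNReal.ofReal (c * H x ^ S) ∂μ (Fin.last n) := by
          have hmeas : MeasurableSet {y : Fin (n + 1) → ℝ | Monotone y ∧ ∀ m, y m ≤ t} := by
            simp only [Set.ofPred_and, Set.ofPred_forall]
            exact (isClosed_monotone.inter <| isClosed_iInter fun m =>
              isClosed_le (continuous_apply m) continuous_const).measurableSet
          rw [Measure.pi_eq_lintegral_snoc μ hmeas, ← lintegral_indicator measurableSet_Iic]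
          exact lintegral_congr hsection
      _ = ENNReal.ofReal c * ∫⁻ x in Set.Iic t, ENNReal.ofReal (H x ^ S) ∂μ (Fin.last n) := by
          rw [← lintegral_const_mul' _ _ ENNReal.ofReal_ne_top]
          simp_rw [ENNReal.ofReal_mul hc0]
      _ = ENNReal.ofReal (savageCoeff η * H t ^ ∑ i, η i) := by
          rw [setLIntegral_Iic_rpow_of_cdf_eq_rpow hH hH0 (hη _)
              (sum_nonneg fun i _ => (hη _).le) (hcdf _),
            ← ENNReal.ofReal_mul hc0, savageCoeff_succ,
            Fin.sum_univ_castSucc η, mul_assoc]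

lemma pi_setOf_monotone {H : ℝ → ℝ} (hH : Continuous H) (hH0 : ∀ x, 0 ≤ H x)
    (hHtop : Tendsto H atTop (nhds 1)) {n : ℕ} (μ : Fin n → Measure ℝ)
    [∀ i, IsProbabilityMeasure (μ i)] {η : Fin n → ℝ} (hη : ∀ i, 0 < η i)
    (hcdf : ∀ i x, cdf (μ i) x = H x ^ η i) :
    Measure.pi μ {y | Monotone y} = ENNReal.ofReal (savageCoeff η) := by
  have hunion : ⋃ t : ℝ, {y : Fin n → ℝ | Monotone y ∧ ∀ m, y m ≤ t} = {y | Monotone y} := by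
    ext y
    simp only [Set.mem_iUnion, Set.mem_ofPred_eq]
    exact ⟨fun ⟨_, h, _⟩ => h, fun h =>
      (Set.finite_range y).bddAbove.imp fun t ht => ⟨h, fun m => ht ⟨m, rfl⟩⟩⟩
  have hmono : Monotone fun t : ℝ => {y : Fin n → ℝ | Monotone y ∧ ∀ m, y m ≤ t} :=
    fun s t hst y hy => ⟨hy.1, fun m => (hy.2 m).trans hst⟩
  have hlim : Tendsto (fun t => ENNReal.ofReal (savageCoeff η * H t ^ ∑ i, η i)) atTop
      (nhds (ENNReal.ofReal (savageCoeff η))) := by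
    simpa using ENNReal.tendsto_ofReal
      ((hHtop.rpow_const (Or.inl one_ne_zero)).const_mul (savageCoeff η))
  rw [← hunion]
  refine tendsto_nhds_unique (tendsto_measure_iUnion_atTop hmono) ?_
  simpa only [Function.comp_def, pi_setOf_monotone_and_le hH hH0 μ hη hcdf] using hlim

/-- **Savage's formula for the identity permutation.** If `X 1, …, X N` are
independent with distribution functions `F i = H ^ (η i)` (`η i > 0`, `H` a
continuous distribution function), then
`P(X 1 ≤ X 2 ≤ ⋯ ≤ X N) = (∏ η i) / ∏_{i=1}^{N} (∑_{j=1}^{i} η j)`. -/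
theorem savage_identity_permutation_probability
    {Ω : Type*} [MeasurableSpace Ω] (P : Measure Ω) [IsProbabilityMeasure P]
    (N : ℕ) (X : Fin N → Ω → ℝ) (η : Fin N → ℝ) (H : ℝ → ℝ)
    (hmeas : ∀ i, Measurable (X i))
    (hindep : iIndepFun X P)
    (hη : ∀ i, 0 < η i)
    (hHcont : Continuous H) (hHmono : Monotone H)
    (hHbot : Tendsto H atBot (nhds 0)) (hHtop : Tendsto H atTop (nhds 1))
    (hcdf : ∀ i x, (P {ω | X i ω ≤ x}).toReal = H x ^ η i) :
    (P {ω | ∀ m m' : Fin N, m ≤ m' → X m ω ≤ X m' ω}).toReal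
      = (∏ i, η i) / ∏ i : Fin N, (∑ j ∈ Finset.Iic i, η j) := by
  have hH0 : ∀ x, 0 ≤ H x := fun x =>
    le_of_tendsto hHbot (eventually_atBot.2 ⟨x, fun y hy => hHmono hy⟩)
  have hlaw : P.map (fun ω i => X i ω) = Measure.pi fun i => P.map (X i) :=
    (iIndepFun_iff_map_fun_eq_pi_map fun i => (hmeas i).aemeasurable).1 hindep
  have : ∀ i, IsProbabilityMeasure (P.map (X i)) := fun i =>
    Measure.isProbabilityMeasure_map (hmeas i).aemeasurable
  have hcdf' : ∀ i x, cdf (P.map (X i)) x = H x ^ η i := fun i x => by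
    rw [cdf_eq_real, map_measureReal_apply (hmeas i) measurableSet_Iic]
    exact hcdf i x
  calc (P {ω | ∀ m m' : Fin N, m ≤ m' → X m ω ≤ X m' ω}).toReal
      = (P.map (fun ω i => X i ω) {y | Monotone y}).toReal := by
        rw [Measure.map_apply (measurable_pi_lambda _ hmeas) isClosed_monotone.measurableSet]
        rfl
    _ = savageCoeff η := by
        rw [hlaw, pi_setOf_monotone hHcont hH0 hHtop _ hη hcdf',
          ENNReal.toReal_ofReal (savageCoeff_nonneg fun i => (hη i).le)]
end

section
/- For any positive real numbers η_1, ..., η_N, summing Savage's ordering probabilities over all permutations gives one: ∑_{σ ∈ S_N} ∏_{i=1}^{N} ( 1 / ∑_{j=1}^{i} η_{σ(j)} ) = 1 / ∏_{i=1}^{N} η_i, where the outer sum is over all permutations σ of {1,...,N}. -/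
/-!
Condition on the index `p = σ (Fin.last _)` placed last. Its prefix sum is the full sum `∑ η`,
and the other factors form the same expression for the remaining `N - 1` weights, whose sum over
orderings is `η p / ∏ η` by induction. Summing over `p` gives `(∑ η / ∏ η) / ∑ η = 1 / ∏ η`.
-/

open Finset Equiv

def Equiv.Perm.decomposeFinLast {n : ℕ} : Perm (Fin (n + 1)) ≃ Fin (n + 1) × Perm (Fin n) :=
  ((Equiv.permCongr finSuccEquivLast).trans Equiv.Perm.decomposeOption).trans
    (Equiv.prodCongr finSuccEquivLast.symm (Equiv.refl _))

namespace Equiv.Perm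

variable {n : ℕ}

@[simp]
theorem decomposeFinLast_symm_apply_castSucc (p : Fin (n + 1)) (e : Perm (Fin n)) (i : Fin n) :
    decomposeFinLast.symm (p, e) i.castSucc = swap (Fin.last n) p (e i).castSucc := by
  induction p using Fin.lastCases with
  | last => simp [decomposeFinLast]
  | cast j =>
    by_cases h : j = e i
    · simp [h, decomposeFinLast]
    · simp [decomposeFinLast, swap_apply_def, Ne.symm h]

end Equiv.Perm

theorem Fin.prod_swap_last_castSucc_mul {M : Type*} [CommMonoid M] {n : ℕ}
    (f : Fin (n + 1) → M) (p : Fin (n + 1)) :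
    (∏ i : Fin n, f (swap (Fin.last n) p i.castSucc)) * f p = ∏ i, f i := by
  rw [← Equiv.prod_comp (swap (Fin.last n) p) f, Fin.prod_univ_castSucc, swap_apply_left]

section Savage

variable {K : Type*} [Field K] {n : ℕ}

/-- `(∏ i, η i) * savageWeight η σ` is Savage's probability of the ordering `σ`. -/
def savageWeight (η : Fin n → K) (σ : Perm (Fin n)) : K :=
  ∏ i, 1 / ∑ j ∈ Iic i, η (σ j)

theorem savageWeight_decomposeFinLast_symm (η : Fin (n + 1) → K) (p : Fin (n + 1))
    (e : Perm (Fin n)) :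
    savageWeight η (Perm.decomposeFinLast.symm (p, e))
      = savageWeight (fun i ↦ η (swap (Fin.last n) p i.castSucc)) e / ∑ i, η i := by
  simp only [savageWeight, Fin.prod_univ_castSucc, Fin.sum_Iic_castSucc,
    Perm.decomposeFinLast_symm_apply_castSucc, ← Fin.top_eq_last, Iic_top,
    Equiv.sum_comp, ← div_eq_mul_one_div]

theorem sum_savageWeight [LinearOrder K] [IsStrictOrderedRing K] (η : Fin n → K)
    (hη : ∀ i, 0 < η i) :
    ∑ σ, savageWeight η σ = 1 / ∏ i, η i := by
  induction n with
  | zero => simp [savageWeight]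
  | succ n ih =>
    have hsum : ∑ i, η i ≠ 0 := (sum_pos (fun i _ ↦ hη i) univ_nonempty).ne'
    calc ∑ σ, savageWeight η σ
        = ∑ p, ∑ e, savageWeight η (Perm.decomposeFinLast.symm (p, e)) := by
          rw [← Fintype.sum_prod_type', Equiv.sum_comp]
      _ = ∑ p, η p / (∏ i, η i) / ∑ i, η i := by
          refine sum_congr rfl fun p _ ↦ ?_
          simp only [savageWeight_decomposeFinLast_symm]
          rw [← sum_div, ih _ fun i ↦ hη _, ← Fin.prod_swap_last_castSucc_mul η p]
          field_simp [(hη p).ne']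
      _ = 1 / ∏ i, η i := by
          rw [← sum_div, ← sum_div, div_right_comm, div_self hsum]

end Savage

/-- **Savage's probabilities sum to one.** For positive reals `η 1, …, η N`,
`∑_{σ ∈ S_N} ∏_{i=1}^{N} 1 / (∑_{j=1}^{i} η (σ j)) = 1 / ∏_{i=1}^{N} η i`. -/
theorem sum_savage_probabilities_eq_one
    (N : ℕ) (η : Fin N → ℝ) (hη : ∀ i, 0 < η i) :
    ∑ σ : Equiv.Perm (Fin N), ∏ i : Fin N, (1 / ∑ j ∈ Finset.Iic i, η (σ j))
      = 1 / ∏ i, η i :=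
  sum_savageWeight η hη
end
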